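/- For 1 < p < 3, let q = 1/(p-1) and for Λ > 0, 0 < r < R_Λ = √(3/Λ), define φ_q(r) = (r^{2q-1}/√(1-(Λ/3)r²)) · ∫_r^{R_Λ} ρ^{-2q}(1-(Λ/3)ρ²)^{-1/2} dρ. Then the recursive relation (2q+1)·φ_{q+1}(r) = 2q·φ_q(r)·(Λ/3)r² + 1 holds for all r ∈ (0, R_Λ). -/

import Mathlib

/-!
With `R = √(3/Λ)`, the function `ρ ↦ ρ ^ (-(2q+1)) √(1 - Λ/3 ρ²)` vanishes at `R` and has derivative
`2q (Λ/3) ρ ^ (-2q) / √(1 - Λ/3 ρ²) - (2q+1) ρ ^ (-2q-2) / √(1 - Λ/3 ρ²)`. Integrating this over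
`[r, R]` relates the integrals defining `φ_{q+1}` and `φ_q`; multiplying by `r ^ (2q+1) / √(1 - Λ/3 r²)`
gives the recursion. Both integrands are integrable near the singular endpoint `R` because
`1 / √(1 - Λ/3 ρ²)` is the derivative of the monotone function `R arcsin (ρ / R)`.
-/

open Real Filter MeasureTheory

/-- The auxiliary function `φ_q`. -/
noncomputable def phiAux (Λ q r : ℝ) : ℝ :=
  r ^ (2 * q - 1) / Real.sqrt (1 - Λ / 3 * r ^ 2) *
    ∫ ρ in r..Real.sqrt (3 / Λ), ρ ^ (-(2 * q)) / Real.sqrt (1 - Λ / 3 * ρ ^ 2)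

lemma lambda_div_three_mul_sqrt_sq {Λ : ℝ} (hΛ : 0 < Λ) : Λ / 3 * √(3 / Λ) ^ 2 = 1 := by
  rw [sq_sqrt (by positivity)]; field_simp

lemma intervalIntegrable_inv_sqrt_one_sub {Λ : ℝ} (hΛ : 0 < Λ) :
    IntervalIntegrable (fun ρ => (√(1 - Λ / 3 * ρ ^ 2))⁻¹) volume (-√(3 / Λ)) √(3 / Λ) := by
  have hRΛ := lambda_div_three_mul_sqrt_sq hΛ
  set R := √(3 / Λ)
  have hR : 0 < R := sqrt_pos.2 (by positivity)
  rw [intervalIntegrable_iff_integrableOn_Ioc_of_le (by linarith)]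
  refine intervalIntegral.integrableOn_deriv_of_nonneg (g := fun ρ => R * arcsin (ρ / R))
    (by fun_prop) (fun ρ hρ => ?_) (fun ρ _ => by positivity)
  have hρR : ρ / R ∈ Set.Ioo (-1) 1 := by
    constructor
    · rw [lt_div_iff₀ hR]; linarith [hρ.1]
    · rw [div_lt_iff₀ hR]; linarith [hρ.2]
  have hsq : (ρ / R) ^ 2 = Λ / 3 * ρ ^ 2 := by
    rw [div_pow, div_eq_iff (by positivity)]; linear_combination -ρ ^ 2 * hRΛ
  refine (((hasDerivAt_arcsin hρR.1.ne' hρR.2.ne).comp ρ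
    ((hasDerivAt_id ρ).div_const R)).const_mul R).congr_deriv ?_
  rw [hsq]; field_simp

lemma one_sub_pos_of_lt_sqrt {Λ x : ℝ} (hΛ : 0 < Λ) (hx0 : 0 ≤ x) (hx : x < √(3 / Λ)) :
    0 < 1 - Λ / 3 * x ^ 2 := by
  have := lambda_div_three_mul_sqrt_sq hΛ
  nlinarith

lemma intervalIntegrable_rpow_div_sqrt {Λ r : ℝ} (hΛ : 0 < Λ) (a : ℝ) (hr0 : 0 < r)
    (hrR : r ≤ √(3 / Λ)) :
    IntervalIntegrable (fun ρ => ρ ^ a / √(1 - Λ / 3 * ρ ^ 2)) volume r √(3 / Λ) := by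
  have hR : 0 ≤ √(3 / Λ) := sqrt_nonneg _
  simp only [div_eq_mul_inv (_ ^ a)]
  refine ((intervalIntegrable_inv_sqrt_one_sub hΛ).mono_set ?_).continuousOn_mul ?_
  · rw [Set.uIcc_of_le hrR, Set.uIcc_of_le (by linarith)]
    exact Set.Icc_subset_Icc (by linarith) le_rfl
  · rw [Set.uIcc_of_le hrR]
    exact continuousOn_id.rpow_const fun x hx => Or.inl (hr0.trans_le hx.1).ne'

lemma hasDerivAt_rpow_mul_sqrt (c q : ℝ) {ρ : ℝ} (hρ : 0 < ρ) (hu : 0 < 1 - c * ρ ^ 2) :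
    HasDerivAt (fun x => x ^ (-(2 * q + 1)) * √(1 - c * x ^ 2))
      (2 * q * c * (ρ ^ (-(2 * q)) / √(1 - c * ρ ^ 2))
        - (2 * q + 1) * (ρ ^ (-(2 * (q + 1))) / √(1 - c * ρ ^ 2))) ρ := by
  have hpow : HasDerivAt (fun x : ℝ => x ^ (-(2 * q + 1)))
      (-(2 * q + 1) * ρ ^ (-(2 * q + 1) - 1)) ρ :=
    hasDerivAt_rpow_const (Or.inl hρ.ne')
  have hsqrt : HasDerivAt (fun x : ℝ => √(1 - c * x ^ 2))
      (-(c * (2 * ρ)) / (2 * √(1 - c * ρ ^ 2))) ρ := by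
    have := (((hasDerivAt_pow 2 ρ).const_mul c).const_sub 1).sqrt hu.ne'
    simpa using this
  refine (hpow.mul hsqrt).congr_deriv ?_
  have hs : √(1 - c * ρ ^ 2) ^ 2 = 1 - c * ρ ^ 2 := sq_sqrt hu.le
  have hs0 : 0 < √(1 - c * ρ ^ 2) := sqrt_pos.2 hu
  have hexp : ∀ k : ℝ, ρ ^ (-(2 * q) - k) = ρ ^ (-(2 * q)) * (ρ ^ k)⁻¹ := fun k => by
    rw [sub_eq_add_neg, rpow_add hρ, rpow_neg hρ.le k]
  rw [show -(2 * q + 1) - 1 = -(2 * q) - 2 by ring, show -(2 * q + 1) = -(2 * q) - 1 by ring,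
    show -(2 * (q + 1)) = -(2 * q) - 2 by ring, hexp, hexp, rpow_one, rpow_two]
  generalize √(1 - c * ρ ^ 2) = s at hs hs0 ⊢
  field_simp
  linear_combination -(2 * q + 1) * hs

lemma integral_rpow_div_sqrt_recursion {Λ r : ℝ} (hΛ : 0 < Λ) (q : ℝ) (hr0 : 0 < r)
    (hrR : r ≤ √(3 / Λ)) :
    (2 * q + 1) * ∫ ρ in r..√(3 / Λ), ρ ^ (-(2 * (q + 1))) / √(1 - Λ / 3 * ρ ^ 2) =
      2 * q * (Λ / 3) * (∫ ρ in r..√(3 / Λ), ρ ^ (-(2 * q)) / √(1 - Λ / 3 * ρ ^ 2)) +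
        r ^ (-(2 * q + 1)) * √(1 - Λ / 3 * r ^ 2) := by
  have hint₁ :=
    (intervalIntegrable_rpow_div_sqrt hΛ (-(2 * q)) hr0 hrR).const_mul (2 * q * (Λ / 3))
  have hint₂ :=
    (intervalIntegrable_rpow_div_sqrt hΛ (-(2 * (q + 1))) hr0 hrR).const_mul (2 * q + 1)
  have hcont : ContinuousOn (fun x => x ^ (-(2 * q + 1)) * √(1 - Λ / 3 * x ^ 2))
      (Set.Icc r √(3 / Λ)) :=
    (continuousOn_id.rpow_const fun x hx => Or.inl (hr0.trans_le hx.1).ne').mul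
      (by fun_prop)
  have hFTC := intervalIntegral.integral_eq_sub_of_hasDerivAt_of_le hrR hcont
    (fun x hx => hasDerivAt_rpow_mul_sqrt (Λ / 3) q (hr0.trans hx.1)
      (one_sub_pos_of_lt_sqrt hΛ (hr0.trans hx.1).le hx.2)) (hint₁.sub hint₂)
  rw [intervalIntegral.integral_sub hint₁ hint₂, intervalIntegral.integral_const_mul,
    intervalIntegral.integral_const_mul, lambda_div_three_mul_sqrt_sq hΛ, sub_self, sqrt_zero,
    mul_zero] at hFTC
  linarith

theorem stmt_4_general (Λ q : ℝ) (hΛ : 0 < Λ) (r : ℝ) (hr0 : 0 < r) (hrR : r < Real.sqrt (3 / Λ)) :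
    (2 * q + 1) * phiAux Λ (q + 1) r = 2 * q * phiAux Λ q r * (Λ / 3 * r ^ 2) + 1 := by
  have hs : 0 < √(1 - Λ / 3 * r ^ 2) := sqrt_pos.2 (one_sub_pos_of_lt_sqrt hΛ hr0.le hrR)
  have hpow : r ^ (2 * q + 1) = r ^ (2 * q - 1) * r ^ 2 := by
    rw [show 2 * q + 1 = 2 * q - 1 + 2 by ring, rpow_add hr0, rpow_two]
  have hinv : r ^ (2 * q + 1) * r ^ (-(2 * q + 1)) = 1 := by
    rw [rpow_neg hr0.le, mul_inv_cancel₀ (rpow_pos_of_pos hr0 _).ne']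
  unfold phiAux
  rw [show 2 * (q + 1) - 1 = 2 * q + 1 by ring, mul_left_comm,
    integral_rpow_div_sqrt_recursion hΛ q hr0 hrR.le]
  generalize (∫ ρ in r..√(3 / Λ), ρ ^ (-(2 * q)) / √(1 - Λ / 3 * ρ ^ 2)) = I
  generalize √(1 - Λ / 3 * r ^ 2) = s at hs ⊢
  field_simp
  linear_combination 2 * q * Λ * I * hpow + 3 * s * hinv

/-- The recursive relation `(2q+1) φ_{q+1}(r) = 2q φ_q(r) (Λ/3) r² + 1`. -/
theorem stmt_4 (Λ p q : ℝ) (hΛ : 0 < Λ) (hp1 : 1 < p) (hp3 : p < 3)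
    (hq : q = 1 / (p - 1)) (r : ℝ) (hr0 : 0 < r) (hrR : r < Real.sqrt (3 / Λ)) :
    (2 * q + 1) * phiAux Λ (q + 1) r = 2 * q * phiAux Λ q r * (Λ / 3 * r ^ 2) + 1 :=
  stmt_4_general Λ q hΛ r hr0 hrR
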